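/- arXiv:1802.09785 — 4 statements merged into one kernel-verified Lean document; each statement's English description precedes it below -/
import Mathlib

section
/- Let G = G^{θ_D}(1,D) ⋯ G^{θ_3}(1,3) G^{θ_2}(1,2) be a product of Givens rotations each acting in the (1,k) plane, applied in increasing order of k. Then the submatrix G_* obtained by deleting the first row and first column of G is lower triangular, i.e., G_{ij} = 0 whenever 1 < i < j ≤ D. -/
open Matrix

/-- The Givens rotation matrix `G^θ(i,j)`. -/
noncomputable def givens (D : ℕ) (i j : Fin D) (θ : ℝ) : Matrix (Fin D) (Fin D) ℝ :=
  Matrix.of fun k l =>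
    if k = i ∧ l = i then Real.cos θ
    else if k = i ∧ l = j then Real.sin θ
    else if k = j ∧ l = i then -Real.sin θ
    else if k = j ∧ l = j then Real.cos θ
    else if k = l then 1 else 0

/-- The product `G = G^{θ_D}(1,D) ⋯ G^{θ_3}(1,3) G^{θ_2}(1,2)` of Givens
rotations in the `(1,k)` planes, applied (as linear maps on vectors) in
increasing order of `k`.  Indices are 0-based: the first coordinate is `0`
and the rotation planes are `(0,k)`, `k = 1, …, D-1`. -/
noncomputable def givensProd (n : ℕ) (θ : Fin (n + 1) → ℝ) :
    Matrix (Fin (n + 1)) (Fin (n + 1)) ℝ :=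
  (((List.finRange (n + 1)).drop 1).reverse.map
    (fun k => givens (n + 1) 0 k (θ k))).prod

/-- Key invariant: the partial product of the first `m` Givens rotations
(applied in increasing order, so the product list is reversed) has
`P i j = 0` whenever `i = 0 ∧ m < j`, or `0 < i < j`. -/
lemma givensProd_aux (n : ℕ) (θ : Fin (n+1) → ℝ) :
    ∀ m ≤ n, ∀ i j : Fin (n+1),
      ((i = 0 ∧ (m : ℕ) < (j : ℕ)) ∨ (0 < i ∧ i < j)) →
      (((((List.finRange (n+1)).drop 1).take m).reverse.map
        (fun k => givens (n+1) 0 k (θ k))).prod) i j = 0 := by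
  intro m
  induction m with
  | zero =>
    intro _ i j h
    simp only [List.take_zero, List.reverse_nil, List.map_nil, List.prod_nil]
    have hij : i ≠ j := by
      rcases h with ⟨h1, h2⟩ | ⟨h1, h2⟩
      · intro he; rw [h1] at he; simp [← he] at h2
      · exact ne_of_lt h2
    simp [Matrix.one_apply, hij]
  | succ m ih =>
    intro hm i j h
    have hm' : m ≤ n := by omega
    have hsplit : ((List.finRange (n+1)).drop 1).take (m+1)
        = ((List.finRange (n+1)).drop 1).take m ++ [(⟨m+1, by omega⟩ : Fin (n+1))] := by
      rw [List.take_succ]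
      congr 1
      have hlen : m < ((List.finRange (n+1)).drop 1).length := by simp; omega
      rw [List.getElem?_eq_getElem hlen]
      simp [List.getElem_drop, List.getElem_finRange]
    rw [hsplit, List.reverse_append, List.reverse_singleton, List.singleton_append,
      List.map_cons, List.prod_cons]
    set km : Fin (n+1) := ⟨m+1, by omega⟩ with hkm
    rw [Matrix.mul_apply]
    apply Finset.sum_eq_zero
    intro s _
    by_cases hg : givens (n+1) 0 km (θ km) i s = 0
    · rw [hg, zero_mul]
    have hkm0 : km ≠ 0 := by simp [hkm, Fin.ext_iff]
    have hscases : (i = 0 ∧ (s = 0 ∨ s = km)) ∨ (i = km ∧ (s = 0 ∨ s = km)) ∨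
        (i ≠ 0 ∧ i ≠ km ∧ s = i) := by
      simp only [givens, Matrix.of_apply] at hg
      split_ifs at hg with h1 h2 h3 h4 h5
      · exact Or.inl ⟨h1.1, Or.inl h1.2⟩
      · exact Or.inl ⟨h2.1, Or.inr h2.2⟩
      · exact Or.inr (Or.inl ⟨h3.1, Or.inl h3.2⟩)
      · exact Or.inr (Or.inl ⟨h4.1, Or.inr h4.2⟩)
      · refine Or.inr (Or.inr ⟨?_, ?_, h5.symm⟩)
        · intro hi0; exact h1 ⟨hi0, hi0 ▸ h5 ▸ rfl⟩
        · intro hik; exact h4 ⟨hik, hik ▸ h5 ▸ rfl⟩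
      · exact absurd rfl hg
    have hPj : (((((List.finRange (n+1)).drop 1).take m).reverse.map
        (fun k => givens (n+1) 0 k (θ k))).prod) s j = 0 := by
      apply ih hm'
      have hjm : ((i = 0 ∨ i = km) → (m + 1 : ℕ) < (j : ℕ)) := by
        intro hik
        rcases h with ⟨h1, h2⟩ | ⟨h1, h2⟩
        · omega
        · rcases hik with rfl | rfl
          · exact absurd h1 (lt_irrefl _)
          · have : (km : ℕ) < (j : ℕ) := h2
            simpa [hkm] using this
      rcases hscases with ⟨hi0, hs⟩ | ⟨hik, hs⟩ | ⟨hi0, hik, hs⟩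
      · rcases hs with rfl | rfl
        · exact Or.inl ⟨rfl, by have := hjm (Or.inl hi0); omega⟩
        · refine Or.inr ⟨?_, ?_⟩
          · simp [hkm, Fin.lt_def]
          · have := hjm (Or.inl hi0); simp [hkm, Fin.lt_def]; omega
      · rcases hs with rfl | rfl
        · exact Or.inl ⟨rfl, by have := hjm (Or.inr hik); omega⟩
        · refine Or.inr ⟨?_, ?_⟩
          · simp [hkm, Fin.lt_def]
          · have := hjm (Or.inr hik); simp [hkm, Fin.lt_def]; omega
      · subst hs
        rcases h with ⟨h1, h2⟩ | ⟨h1, h2⟩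
        · exact absurd h1 hi0
        · exact Or.inr ⟨h1, h2⟩
    rw [hPj, mul_zero]

/-- Deleting the first row and column of `G` yields a lower triangular
submatrix: `G i j = 0` whenever `0 < i < j`. -/
theorem stmt_8 {n : ℕ} (hD : 2 ≤ n + 1) (θ : Fin (n + 1) → ℝ)
    (i j : Fin (n + 1)) (hi : 0 < i) (hij : i < j) :
    givensProd n θ i j = 0 := by
  have htake : ((List.finRange (n+1)).drop 1).take n = (List.finRange (n+1)).drop 1 := by
    apply List.take_of_length_le; simp
  have := givensProd_aux n θ n le_rfl i j (Or.inr ⟨hi, hij⟩)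
  rw [htake] at this
  exact this
end

section
/- For the product G = G^{θ_D}(1,D)⋯G^{θ_2}(1,2) of Givens rotations in the (1,k) planes applied in increasing order of k, the first row of G is given by G_{11} = cos θ_2 cos θ_3 ⋯ cos θ_D and G_{1k} = sin θ_k cos θ_{k+1} ⋯ cos θ_D for 2 ≤ k ≤ D. -/
open Matrix

/-!
Row 0 of `G(0,k) * M` is `cos θ_k • (row 0 of M) + sin θ_k • (row k of M)`, and row `k` of a
product of rotations in planes `(0,m)` with `m ≠ k` is the unit vector `e_k`. Peeling the
rotations off from the left, largest `k` first, each step multiplies the row built so far by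
`cos θ_k` and adds `sin θ_k • e_k`; so `e_k` ends up weighted by `sin θ_k` times the cosines of
the larger indices, and `e_0` by all the cosines.
-/

open Real

noncomputable def givensChain (D : ℕ) (i : Fin D) (θ : Fin D → ℝ) (ks : List (Fin D)) :
    Matrix (Fin D) (Fin D) ℝ :=
  (ks.map fun k => givens D i k (θ k)).prod

section
variable {D : ℕ} {i j k : Fin D} {φ : ℝ} {θ : Fin D → ℝ} {ks : List (Fin D)}

theorem givens_row_self (hji : j ≠ i) :
    givens D i j φ i = cos φ • Pi.single i 1 + sin φ • Pi.single j 1 := by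
  ext l
  by_cases hli : l = i
  · subst hli; simp [givens, hji.symm]
  · by_cases hlj : l = j
    · subst hlj; simp [givens, hli]
    · simp [givens, hli, hlj, Ne.symm hli]

theorem givens_row_of_ne (hki : k ≠ i) (hkj : k ≠ j) : givens D i j φ k = Pi.single k 1 := by
  ext l
  by_cases hlk : l = k
  · subst hlk; simp [givens, hki, hkj]
  · simp [givens, hki, hkj, hlk, Ne.symm hlk]

theorem givensChain_row_of_ne (hki : k ≠ i) (hk : k ∉ ks) :
    givensChain D i θ ks k = Pi.single k 1 := by
  induction ks with
  | nil => ext l; simp [givensChain, Matrix.one_apply, Pi.single_apply, eq_comm]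
  | cons j ks ih =>
    rw [List.mem_cons, not_or] at hk
    change (givens D i j (θ j) * givensChain D i θ ks) k = _
    rw [Matrix.mul_apply_eq_vecMul, givens_row_of_ne hki hk.1, Matrix.single_one_vecMul,
      Matrix.row_apply', ih hk.2]

theorem givensChain_cons_row_self (hki : k ≠ i) (hk : k ∉ ks) :
    givensChain D i θ (k :: ks) i
      = cos (θ k) • givensChain D i θ ks i + sin (θ k) • Pi.single k 1 := by
  change (givens D i k (θ k) * givensChain D i θ ks) i = _
  rw [Matrix.mul_apply_eq_vecMul, givens_row_self hki, Matrix.add_vecMul, Matrix.smul_vecMul,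
    Matrix.smul_vecMul, Matrix.single_one_vecMul, Matrix.single_one_vecMul, Matrix.row_apply',
    Matrix.row_apply', givensChain_row_of_ne hki hk]

theorem givensChain_row_self (hi : i ∉ ks) (hks : ks.SortedGT) :
    givensChain D i θ ks i
      = (∏ m ∈ ks.toFinset, cos (θ m)) • Pi.single i 1
        + ∑ k ∈ ks.toFinset, (sin (θ k) * ∏ m ∈ ks.toFinset with k < m, cos (θ m))
            • Pi.single k 1 := by
  induction ks with
  | nil => ext l; simp [givensChain, Matrix.one_apply, Pi.single_apply, eq_comm]
  | cons k ks ih =>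
    rw [List.mem_cons, not_or] at hi
    rw [List.sortedGT_iff_pairwise, List.pairwise_cons] at hks
    obtain ⟨hk_gt, hks⟩ := hks
    have hk : k ∉ ks := fun h => lt_irrefl k (hk_gt k h)
    have hk' : k ∉ ks.toFinset := by simpa using hk
    have above_k : ({m ∈ insert k ks.toFinset | k < m} : Finset (Fin D)) = ∅ := by
      rw [Finset.filter_insert, if_neg (lt_irrefl k), Finset.filter_eq_empty_iff]
      exact fun m hm => not_lt.mpr (hk_gt m (List.mem_toFinset.mp hm)).le
    have below_k : ∑ l ∈ ks.toFinset,
          (sin (θ l) * ∏ m ∈ insert k ks.toFinset with l < m, cos (θ m)) • Pi.single l 1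
        = cos (θ k) • ∑ l ∈ ks.toFinset,
          (sin (θ l) * ∏ m ∈ ks.toFinset with l < m, cos (θ m)) • Pi.single l 1 := by
      rw [Finset.smul_sum]
      refine Finset.sum_congr rfl fun l hl => ?_
      rw [Finset.filter_insert, if_pos (hk_gt l (List.mem_toFinset.mp hl)),
        Finset.prod_insert (by simp [hk]), smul_smul, mul_left_comm]
    rw [givensChain_cons_row_self (Ne.symm hi.1) hk, ih hi.2 hks.sortedGT, List.toFinset_cons,
      Finset.prod_insert hk', Finset.sum_insert hk', above_k, below_k, Finset.prod_empty,
      mul_one, smul_add, smul_smul]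
    abel

end

theorem stmt_10_general {n : ℕ} (θ : Fin (n + 1) → ℝ) :
    givensProd n θ 0 0 = ∏ m ∈ Finset.univ.erase 0, Real.cos (θ m) ∧
    ∀ k : Fin (n + 1), k ≠ 0 →
      givensProd n θ 0 k
        = Real.sin (θ k) * ∏ m ∈ Finset.Ioi k, Real.cos (θ m) := by
  set ks := ((List.finRange n).map Fin.succ).reverse
  have hprod : givensProd n θ = givensChain (n + 1) 0 θ ks := by
    simp [givensProd, givensChain, ks, List.finRange_succ]
  have hks : ks.toFinset = Finset.univ.erase 0 := by
    ext m
    simp [ks, Fin.exists_succ_eq]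
  have hsorted : ks.SortedGT := by
    simpa only [ks, List.sortedGT_reverse, List.sortedLT_iff_pairwise, List.pairwise_map,
      Fin.succ_lt_succ_iff] using List.sortedLT_finRange n
  rw [hprod, givensChain_row_self (by simp [← List.mem_toFinset, hks]) hsorted, hks]
  refine ⟨by simp [Pi.single_apply], fun k hk => ?_⟩
  have hIoi : ({m ∈ Finset.univ.erase 0 | k < m} : Finset (Fin (n + 1))) = Finset.Ioi k := by
    ext m
    simpa using fun hkm => ((Fin.pos_of_ne_zero hk).trans hkm).ne'
  simp [Pi.single_apply, hk, hIoi]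

/-- First row of the product of Givens rotations:
`G_{11} = cos θ_2 ⋯ cos θ_D` and `G_{1k} = sin θ_k · cos θ_{k+1} ⋯ cos θ_D`. -/
theorem stmt_10 {n : ℕ} (hD : 2 ≤ n + 1) (θ : Fin (n + 1) → ℝ) :
    givensProd n θ 0 0 = ∏ m ∈ Finset.univ.erase 0, Real.cos (θ m) ∧
    ∀ k : Fin (n + 1), k ≠ 0 →
      givensProd n θ 0 k
        = Real.sin (θ k) * ∏ m ∈ Finset.Ioi k, Real.cos (θ m) :=
  stmt_10_general θ
end

section
/- Let Q be a D×D orthogonal matrix with blocks Q = [[Q₁₁, q₁ᵀ],[q₂, Q_*]], and let N = (N₁, Ñᵀ)ᵀ be a unit vector with QN = (−1, 0, …, 0)ᵀ. Let σ = [[σ₁₁, 0ᵀ],[s, σ_*]] be an invertible lower-triangular block matrix (σ₁₁ ≠ 0, σ_* invertible lower triangular), and set w = σ₁₁ q₂ + Q_* s. Then the linear system Q_* σ_* z = w in z ∈ ℝ^{D−1} has a solution if and only if N₁ ≠ 0; and when N₁ ≠ 0, the unique solution satisfies σ_* z = s − (σ₁₁/N₁) Ñ. -/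
open Matrix

/-- Rank-one update lemma: with `Q` orthogonal satisfying `QN = −e₁` for a unit
vector `N = (N₁, Ñᵀ)ᵀ`, and `σ = [[σ₁₁, 0ᵀ],[s, σ_*]]` invertible lower
triangular, setting `w = σ₁₁ q₂ + Q_* s`, the system `Q_* σ_* z = w` is
solvable iff `N₁ ≠ 0`; in that case the unique solution satisfies
`σ_* z = s − (σ₁₁/N₁) Ñ`. -/
theorem stmt_14 {n : ℕ} (Q σ : Matrix (Fin (n + 1)) (Fin (n + 1)) ℝ)
    (hQ1 : Q * Qᵀ = 1) (hQ2 : Qᵀ * Q = 1)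
    (N : Fin (n + 1) → ℝ) (hNunit : N ⬝ᵥ N = 1)
    (hQN : Q.mulVec N = -(Pi.single 0 1))
    (hlt : ∀ i j : Fin (n + 1), i < j → σ i j = 0)
    (hσ11 : σ 0 0 ≠ 0)
    (hσstar : IsUnit (σ.submatrix Fin.succ Fin.succ).det)
    (w : Fin n → ℝ)
    (hw : w = (fun i => σ 0 0 * Q i.succ 0)
        + (Q.submatrix Fin.succ Fin.succ).mulVec (fun k => σ k.succ 0)) :
    ((∃ z : Fin n → ℝ,
        (Q.submatrix Fin.succ Fin.succ * σ.submatrix Fin.succ Fin.succ).mulVec z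
          = w) ↔ N 0 ≠ 0) ∧
    (N 0 ≠ 0 → ∀ z : Fin n → ℝ,
      (Q.submatrix Fin.succ Fin.succ * σ.submatrix Fin.succ Fin.succ).mulVec z
          = w →
      (σ.submatrix Fin.succ Fin.succ).mulVec z
        = (fun k => σ k.succ 0) - (σ 0 0 / N 0) • (fun k => N k.succ)) := by
  -- N = -(first row of Q)
  have hN : ∀ j, N j = -Q 0 j := by
    have h1 : Qᵀ.mulVec (Q.mulVec N) = Qᵀ.mulVec (-(Pi.single 0 1)) :=
      congrArg _ hQN
    rw [Matrix.mulVec_mulVec, hQ2, Matrix.one_mulVec] at h1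
    intro j
    have h2 := congrFun h1 j
    simpa [Matrix.mulVec, dotProduct, Pi.single_apply, mul_ite] using h2
  -- row relation: N₀ q₂ + Q_* Ñ = 0
  have hrow : ∀ i : Fin n,
      Q i.succ 0 * N 0 + ∑ k : Fin n, Q i.succ k.succ * N k.succ = 0 := by
    intro i
    have h2 := congrFun hQN i.succ
    simp only [Matrix.mulVec, dotProduct, Pi.neg_apply,
      Pi.single_apply] at h2
    rw [Fin.sum_univ_succ] at h2
    simpa [Fin.succ_ne_zero i] using h2
  -- column orthogonality
  have hcol : ∀ j k : Fin (n + 1),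
      Q 0 j * Q 0 k + ∑ i : Fin n, Q i.succ j * Q i.succ k
        = if j = k then (1:ℝ) else 0 := by
    intro j k
    have h2 := congrFun (congrFun hQ2 j) k
    simp only [Matrix.mul_apply, Matrix.transpose_apply, Matrix.one_apply] at h2
    rw [Fin.sum_univ_succ] at h2
    exact h2
  have hQsN : (Q.submatrix Fin.succ Fin.succ).mulVec (fun k => N k.succ)
      = fun i => -(N 0 * Q i.succ 0) := by
    funext i
    have := hrow i
    simp only [Matrix.mulVec, dotProduct, Matrix.submatrix_apply]
    linarith
  -- norm split
  have hnorm : N 0 * N 0 + ∑ k : Fin n, N k.succ * N k.succ = 1 := by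
    have := hNunit
    simp only [dotProduct] at this
    rwa [Fin.sum_univ_succ] at this
  -- injectivity of Q_* when N 0 ≠ 0
  have hinj : N 0 ≠ 0 → ∀ v : Fin n → ℝ,
      (Q.submatrix Fin.succ Fin.succ).mulVec v = 0 → v = 0 := by
    intro hN0 v hv
    have key : ∀ j : Fin n, v j = N j.succ * (∑ k : Fin n, N k.succ * v k) := by
      intro j
      have h0 : ∑ i : Fin n, Q i.succ j.succ *
          ((Q.submatrix Fin.succ Fin.succ).mulVec v) i = 0 := by
        rw [hv]; simp
      simp only [Matrix.mulVec, dotProduct, Matrix.submatrix_apply,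
        Finset.mul_sum] at h0
      rw [Finset.sum_comm] at h0
      have h1 : ∀ k : Fin n, ∑ i : Fin n, Q i.succ j.succ * (Q i.succ k.succ * v k)
          = ((if j = k then (1:ℝ) else 0) - N j.succ * N k.succ) * v k := by
        intro k
        have hc := hcol j.succ k.succ
        simp only [Fin.succ_inj] at hc
        have heq : ∑ i : Fin n, Q i.succ j.succ * (Q i.succ k.succ * v k)
            = (∑ i : Fin n, Q i.succ j.succ * Q i.succ k.succ) * v k := by
          rw [Finset.sum_mul]
          exact Finset.sum_congr rfl fun i _ => (mul_assoc _ _ _).symm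
        rw [heq]
        have h3 : ∑ i : Fin n, Q i.succ j.succ * Q i.succ k.succ
            = (if j = k then (1:ℝ) else 0) - Q 0 j.succ * Q 0 k.succ := by
          linarith
        rw [h3, hN j.succ, hN k.succ]; ring
      rw [Finset.sum_congr rfl (fun k _ => h1 k)] at h0
      simp only [sub_mul, ite_mul, one_mul, zero_mul] at h0
      rw [Finset.sum_sub_distrib,
        Finset.sum_ite_eq (Finset.univ : Finset (Fin n))] at h0
      simp only [Finset.mem_univ, if_true] at h0
      have hms : ∑ x : Fin n, N j.succ * N x.succ * v x
          = N j.succ * ∑ k : Fin n, N k.succ * v k := by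
        rw [Finset.mul_sum]
        exact Finset.sum_congr rfl fun x _ => mul_assoc _ _ _
      rw [hms] at h0
      linarith
    set c := ∑ k : Fin n, N k.succ * v k with hc
    have h5 : ∑ k : Fin n, N k.succ * N k.succ = 1 - N 0 * N 0 := by linarith
    have hcc : c = (1 - N 0 * N 0) * c := by
      calc c = ∑ k : Fin n, N k.succ * v k := hc
        _ = ∑ k : Fin n, N k.succ * (N k.succ * c) :=
            Finset.sum_congr rfl fun k _ => by rw [key k]
        _ = (∑ k : Fin n, N k.succ * N k.succ) * c := by
            rw [Finset.sum_mul]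
            exact Finset.sum_congr rfl fun k _ => (mul_assoc _ _ _).symm
        _ = (1 - N 0 * N 0) * c := by rw [h5]
    have h6 : N 0 * N 0 * c = 0 := by linear_combination hcc
    have hc0 : c = 0 := by
      rcases mul_eq_zero.mp h6 with h | h
      · exact absurd (mul_self_eq_zero.mp h) hN0
      · exact h
    funext j
    rw [key j, hc0, mul_zero]; rfl
  -- the explicit solution when N 0 ≠ 0
  have hsol : N 0 ≠ 0 → (Q.submatrix Fin.succ Fin.succ).mulVec
      ((fun k => σ k.succ 0) - (σ 0 0 / N 0) • (fun k => N k.succ)) = w := by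
    intro hN0
    rw [Matrix.mulVec_sub, Matrix.mulVec_smul, hQsN, hw]
    funext i
    simp only [Pi.sub_apply, Pi.smul_apply, Pi.add_apply, smul_eq_mul]
    field_simp
    ring
  constructor
  · constructor
    · rintro ⟨z, hz⟩ hN0
      -- N 0 = 0 leads to contradiction
      have hQ00 : Q 0 0 = 0 := by have := hN 0; rw [hN0] at this; linarith
      have horth : ∀ v : Fin n → ℝ,
          ∑ i : Fin n, Q i.succ 0 * ((Q.submatrix Fin.succ Fin.succ).mulVec v) i
            = 0 := by
        intro v
        simp only [Matrix.mulVec, dotProduct, Matrix.submatrix_apply,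
          Finset.mul_sum]
        rw [Finset.sum_comm]
        apply Finset.sum_eq_zero
        intro k _
        have hc := hcol 0 k.succ
        rw [if_neg (Fin.succ_ne_zero k).symm, hQ00, zero_mul, zero_add] at hc
        have heq : ∑ i : Fin n, Q i.succ 0 * (Q i.succ k.succ * v k)
            = (∑ i : Fin n, Q i.succ 0 * Q i.succ k.succ) * v k := by
          rw [Finset.sum_mul]
          exact Finset.sum_congr rfl fun i _ => (mul_assoc _ _ _).symm
        rw [heq, hc, zero_mul]
      have hq2 : ∑ i : Fin n, Q i.succ 0 * Q i.succ 0 = 1 := by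
        have hc := hcol 0 0
        rw [if_pos rfl, hQ00] at hc
        linarith
      have h1 : ∑ i : Fin n, Q i.succ 0 * w i = 0 := by
        rw [← hz, ← Matrix.mulVec_mulVec]
        exact horth _
      have h2 : ∑ i : Fin n, Q i.succ 0 * w i = σ 0 0 := by
        rw [hw]
        simp only [Pi.add_apply]
        rw [Finset.sum_congr rfl (fun i _ => mul_add (Q i.succ 0) _ _),
          Finset.sum_add_distrib, horth]
        have heq : ∑ i : Fin n, Q i.succ 0 * (σ 0 0 * Q i.succ 0)
            = σ 0 0 * ∑ i : Fin n, Q i.succ 0 * Q i.succ 0 := by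
          rw [Finset.mul_sum]
          exact Finset.sum_congr rfl fun i _ => by ring
        rw [heq, hq2, mul_one, add_zero]
      rw [h1] at h2
      exact hσ11 h2.symm
    · intro hN0
      refine ⟨(σ.submatrix Fin.succ Fin.succ)⁻¹.mulVec
        ((fun k => σ k.succ 0) - (σ 0 0 / N 0) • (fun k => N k.succ)), ?_⟩
      have hcancel : (σ.submatrix Fin.succ Fin.succ).mulVec
          ((σ.submatrix Fin.succ Fin.succ)⁻¹.mulVec
            ((fun k => σ k.succ 0) - (σ 0 0 / N 0) • (fun k => N k.succ)))
          = (fun k => σ k.succ 0) - (σ 0 0 / N 0) • (fun k => N k.succ) := by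
        rw [Matrix.mulVec_mulVec, Matrix.mul_nonsing_inv _ hσstar,
          Matrix.one_mulVec]
      rw [← Matrix.mulVec_mulVec, hcancel]
      exact hsol hN0
  · intro hN0 z hz
    have hy : (Q.submatrix Fin.succ Fin.succ).mulVec
        ((σ.submatrix Fin.succ Fin.succ).mulVec z) = w := by
      rw [Matrix.mulVec_mulVec]; exact hz
    have hker : (Q.submatrix Fin.succ Fin.succ).mulVec
        ((σ.submatrix Fin.succ Fin.succ).mulVec z
          - ((fun k => σ k.succ 0) - (σ 0 0 / N 0) • (fun k => N k.succ))) = 0 := by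
      rw [Matrix.mulVec_sub, hy, hsol hN0, sub_self]
    exact sub_eq_zero.mp (hinj hN0 _ hker)
end

section
/- Let Q be orthogonal with blocks [[Q₁₁, q₁ᵀ],[q₂, Q_*]] satisfying QN = −e₁ for a unit vector N = (0, Ñᵀ)ᵀ with first component zero. Let σ = [[σ₁₁, 0ᵀ],[s, σ_*]] be invertible lower triangular, w = σ₁₁ q₂ + Q_* s, and let r solve σ_* r = Ñ. Define Λ_* = Q_* σ_* + (1/‖r‖) w rᵀ. Then Λ_* Λ_*ᵀ = Q_* σ_* σ_*ᵀ Q_*ᵀ + w wᵀ. -/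
open Matrix

/-- With `N₁ = 0`, `Q` orthogonal with `QN = −e₁`, `σ` invertible lower
triangular, `w = σ₁₁ q₂ + Q_* s`, and `r` solving `σ_* r = Ñ`, the matrix
`Λ_* = Q_* σ_* + (1/‖r‖) w rᵀ` satisfies
`Λ_* Λ_*ᵀ = Q_* σ_* σ_*ᵀ Q_*ᵀ + w wᵀ`. -/
theorem stmt_17 {n : ℕ} (Q σ : Matrix (Fin (n + 1)) (Fin (n + 1)) ℝ)
    (hQ1 : Q * Qᵀ = 1) (hQ2 : Qᵀ * Q = 1)
    (N : Fin (n + 1) → ℝ) (hNunit : N ⬝ᵥ N = 1) (hN1 : N 0 = 0)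
    (hQN : Q.mulVec N = -(Pi.single 0 1))
    (hlt : ∀ i j : Fin (n + 1), i < j → σ i j = 0)
    (hσ11 : σ 0 0 ≠ 0)
    (hσstar : IsUnit (σ.submatrix Fin.succ Fin.succ).det)
    (w : Fin n → ℝ)
    (hw : w = (fun i => σ 0 0 * Q i.succ 0)
        + (Q.submatrix Fin.succ Fin.succ).mulVec (fun k => σ k.succ 0))
    (r : Fin n → ℝ)
    (hr : (σ.submatrix Fin.succ Fin.succ).mulVec r = (fun k => N k.succ))
    (Λ : Matrix (Fin n) (Fin n) ℝ)
    (hΛ : Λ = Q.submatrix Fin.succ Fin.succ * σ.submatrix Fin.succ Fin.succ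
        + (1 / Real.sqrt (∑ i, r i ^ 2)) • vecMulVec w r) :
    Λ * Λᵀ =
      Q.submatrix Fin.succ Fin.succ * σ.submatrix Fin.succ Fin.succ *
        (σ.submatrix Fin.succ Fin.succ)ᵀ * (Q.submatrix Fin.succ Fin.succ)ᵀ
      + vecMulVec w w := by
  set Qs := Q.submatrix Fin.succ Fin.succ with hQs
  set σs := σ.submatrix Fin.succ Fin.succ with hσs
  set A := Qs * σs with hA
  set c : ℝ := 1 / Real.sqrt (∑ i, r i ^ 2) with hc
  -- Q_* σ_* r = 0
  have hAr : ∀ i, ∑ k, A i k * r k = 0 := by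
    intro i
    have h1 : ∑ k, A i k * r k = (A.mulVec r) i := rfl
    have h2 : A.mulVec r = Qs.mulVec (fun k => N k.succ) := by
      rw [hA, ← mulVec_mulVec, hr]
    have h3 : Qs.mulVec (fun k => N k.succ) i = (Q.mulVec N) i.succ := by
      simp only [mulVec, dotProduct, hQs, submatrix_apply]
      rw [Fin.sum_univ_succ (f := fun j => Q i.succ j * N j), hN1]
      ring
    rw [h1, h2, h3, hQN]
    simp [Pi.single_apply, Fin.succ_ne_zero]
  -- r ≠ 0, hence ∑ r i ^ 2 > 0
  have hNt : ∑ k : Fin n, N k.succ * N k.succ = 1 := by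
    have := hNunit
    rw [dotProduct, Fin.sum_univ_succ, hN1] at this
    linarith
  have hrne : r ≠ 0 := by
    intro h
    rw [h, mulVec_zero] at hr
    have : (0 : ℝ) = 1 := by
      rw [← hNt]
      refine (Finset.sum_eq_zero ?_).symm
      intro k _
      have : N k.succ = 0 := (congrFun hr.symm k)
      simp [this]
    norm_num at this
  have hSpos : 0 < ∑ i, r i ^ 2 := by
    obtain ⟨i, hi⟩ := Function.ne_iff.mp hrne
    have : (0:ℝ) < r i ^ 2 :=
      lt_of_le_of_ne (sq_nonneg _) (Ne.symm (pow_ne_zero 2 hi))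
    refine lt_of_lt_of_le this ?_
    exact Finset.single_le_sum (f := fun i => r i ^ 2) (fun j _ => sq_nonneg _)
      (Finset.mem_univ i)
  have hcS : c * c * (∑ i, r i ^ 2) = 1 := by
    rw [hc]
    rw [div_mul_div_comm, one_mul, Real.mul_self_sqrt hSpos.le]
    field_simp
  -- entrywise computation
  have hRHS : Qs * σs * σsᵀ * Qsᵀ = A * Aᵀ := by
    rw [hA, transpose_mul, ← Matrix.mul_assoc]
  rw [hRHS]
  ext i j
  simp only [hΛ, Matrix.add_apply, Matrix.mul_apply, transpose_apply,
    Matrix.smul_apply, vecMulVec_apply, smul_eq_mul, ← hA]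
  have expand : ∀ k, (A i k + c * (w i * r k)) * (A j k + c * (w j * r k))
      = A i k * A j k + (c * w j) * (A i k * r k) + (c * w i) * (A j k * r k)
        + (c * c * (w i * w j)) * (r k ^ 2) := by
    intro k; ring
  rw [Finset.sum_congr rfl (fun k _ => expand k)]
  rw [Finset.sum_add_distrib, Finset.sum_add_distrib, Finset.sum_add_distrib,
    ← Finset.mul_sum, ← Finset.mul_sum, ← Finset.mul_sum, hAr i, hAr j]
  have : c * c * (w i * w j) * (∑ k, r k ^ 2) = w i * w j := by
    rw [show c * c * (w i * w j) * (∑ k, r k ^ 2)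
        = (c * c * (∑ k, r k ^ 2)) * (w i * w j) by ring, hcS, one_mul]
  rw [this]
  ring
end
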